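/- Let F(t,·) be a smooth family of Minkowski norms on ℝ^n satisfying the normalized Ricci flow ∂_t g_{ij} = −2Ric_{ij} + 2c(t)·g_{ij}, where c is a smooth function of t alone. Then the mean Cartan torsion evolves exactly as in the un-normalized case: ∂_t I_i = −ρ_i, where ρ := g^{jk}Ric_{jk} and ρ_i := ∂ρ/∂y^i (the terms involving c cancel). -/

import Mathlib

open scoped BigOperators

noncomputable section

/-- Partial derivative of `f` in the `i`-th coordinate direction. -/
def pd {n : ℕ} (i : Fin n) (f : (Fin n → ℝ) → ℝ) : (Fin n → ℝ) → ℝ :=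
  fun y => fderiv ℝ f y (Pi.single i 1)

/-- Fundamental tensor `g_{ij} = (1/2) ∂²(F²)/∂yⁱ∂yʲ`. -/
def gT {n : ℕ} (F : (Fin n → ℝ) → ℝ) (i j : Fin n) : (Fin n → ℝ) → ℝ :=
  fun y => (1 / 2 : ℝ) * pd i (pd j (fun z => F z ^ 2)) y

/-- The fundamental tensor viewed as a matrix. -/
def gMat {n : ℕ} (F : (Fin n → ℝ) → ℝ) (y : Fin n → ℝ) : Matrix (Fin n) (Fin n) ℝ :=
  Matrix.of fun i j => gT F i j y

/-- Inverse fundamental tensor `g^{ij}`. -/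
def gInv {n : ℕ} (F : (Fin n → ℝ) → ℝ) (i j : Fin n) : (Fin n → ℝ) → ℝ :=
  fun y => (gMat F y)⁻¹ i j

/-- Cartan tensor `C_{ijk} = (1/4) ∂³(F²)/∂yⁱ∂yʲ∂yᵏ`. -/
def cartanT {n : ℕ} (F : (Fin n → ℝ) → ℝ) (i j k : Fin n) : (Fin n → ℝ) → ℝ :=
  fun y => (1 / 4 : ℝ) * pd i (pd j (pd k (fun z => F z ^ 2))) y

/-- `y_i = (1/2) ∂(F²)/∂yⁱ`. -/
def yLow {n : ℕ} (F : (Fin n → ℝ) → ℝ) (i : Fin n) : (Fin n → ℝ) → ℝ :=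
  fun y => (1 / 2 : ℝ) * pd i (fun z => F z ^ 2) y

/-- Mean Cartan torsion `I_i = g^{jk} C_{ijk}`. -/
def mC {n : ℕ} (F : (Fin n → ℝ) → ℝ) (i : Fin n) : (Fin n → ℝ) → ℝ :=
  fun y => ∑ j, ∑ k, gInv F j k y * cartanT F i j k y

/-- Raised mean Cartan torsion `I^i = g^{ij} I_j`. -/
def mCUp {n : ℕ} (F : (Fin n → ℝ) → ℝ) (i : Fin n) : (Fin n → ℝ) → ℝ :=
  fun y => ∑ j, gInv F i j y * mC F j y

/-- `‖I‖² = I_i I^i`. -/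
def normI2 {n : ℕ} (F : (Fin n → ℝ) → ℝ) : (Fin n → ℝ) → ℝ :=
  fun y => ∑ i, mC F i y * mCUp F i y

/-- Angular metric `h_{ij} = g_{ij} − F⁻² y_i y_j`. -/
def angular {n : ℕ} (F : (Fin n → ℝ) → ℝ) (i j : Fin n) : (Fin n → ℝ) → ℝ :=
  fun y => gT F i j y - yLow F i y * yLow F j y / F y ^ 2

/-- `Ric_{ij} = (1/2) ∂²(R F²)/∂yⁱ∂yʲ`. -/
def RicT {n : ℕ} (F R : (Fin n → ℝ) → ℝ) (i j : Fin n) : (Fin n → ℝ) → ℝ :=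
  fun y => (1 / 2 : ℝ) * pd i (pd j (fun z => R z * F z ^ 2)) y

/-- `Ric^{ij} = g^{ik} g^{jl} Ric_{kl}`. -/
def RicUp {n : ℕ} (F R : (Fin n → ℝ) → ℝ) (i j : Fin n) : (Fin n → ℝ) → ℝ :=
  fun y => ∑ k, ∑ l, gInv F i k y * gInv F j l y * RicT F R k l y

/-- `ρ = g^{jk} Ric_{jk}`. -/
def rho {n : ℕ} (F R : (Fin n → ℝ) → ℝ) : (Fin n → ℝ) → ℝ :=
  fun y => ∑ j, ∑ k, gInv F j k y * RicT F R j k y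

/-- `ρ^i = g^{ij} ρ_j`. -/
def rhoUp {n : ℕ} (F R : (Fin n → ℝ) → ℝ) (i : Fin n) : (Fin n → ℝ) → ℝ :=
  fun y => ∑ j, gInv F i j y * pd j (rho F R) y

/-- A Minkowski norm on ℝⁿ: smooth away from `0`, positive, positively
1-homogeneous, with positive-definite fundamental tensor. -/
def IsMinkowski {n : ℕ} (F : (Fin n → ℝ) → ℝ) : Prop :=
  ContDiffOn ℝ (⊤ : ℕ∞) F {y : Fin n → ℝ | y ≠ 0} ∧
  (∀ y : Fin n → ℝ, y ≠ 0 → 0 < F y) ∧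
  (∀ y : Fin n → ℝ, y ≠ 0 → ∀ lam : ℝ, 0 < lam → F (lam • y) = lam * F y) ∧
  (∀ y : Fin n → ℝ, y ≠ 0 → ∀ v : Fin n → ℝ, v ≠ 0 →
    0 < ∑ i, ∑ j, gT F i j y * v i * v j)

/-- An (α,β)-Minkowski norm: `F = α · φ(β/α)` with `α` a Riemannian (Euclidean)
norm, `β` a linear form, and `φ` smooth and positive on an open interval
containing the range of `β/α`. -/
def IsAlphaBeta {n : ℕ} (F : (Fin n → ℝ) → ℝ) : Prop :=
  ∃ (a : Matrix (Fin n) (Fin n) ℝ) (b : Fin n → ℝ) (φ : ℝ → ℝ) (s : Set ℝ),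
    a.IsSymm ∧
    (∀ v : Fin n → ℝ, v ≠ 0 → 0 < ∑ i, ∑ j, a i j * v i * v j) ∧
    IsOpen s ∧ ContDiffOn ℝ (⊤ : ℕ∞) φ s ∧ (∀ x ∈ s, 0 < φ x) ∧
    (∀ y : Fin n → ℝ, y ≠ 0 →
      (∑ i, b i * y i) / Real.sqrt (∑ i, ∑ j, a i j * y i * y j) ∈ s ∧
      F y = Real.sqrt (∑ i, ∑ j, a i j * y i * y j) *
        φ ((∑ i, b i * y i) / Real.sqrt (∑ i, ∑ j, a i j * y i * y j)))

/-- Semi-C-reducibility of a Minkowski norm, with scalar functions `p`, `q`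
satisfying `p + q = 1`; in particular the mean Cartan torsion is nowhere zero. -/
def IsSemiCReducible {n : ℕ} (F p q : (Fin n → ℝ) → ℝ) : Prop :=
  (∀ y : Fin n → ℝ, y ≠ 0 → ∃ i, mC F i y ≠ 0) ∧
  (∀ y : Fin n → ℝ, y ≠ 0 → p y + q y = 1) ∧
  (∀ y : Fin n → ℝ, y ≠ 0 → ∀ i j k : Fin n,
    cartanT F i j k y =
      (p y / ((n : ℝ) + 1)) *
        (angular F i j y * mC F k y + angular F j k y * mC F i y +
          angular F k i y * mC F j y) +
      (q y / normI2 F y) * (mC F i y * mC F j y * mC F k y))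

/-- A smooth family, over `t ∈ J`, of functions on `ℝⁿ ∖ {0}`. -/
def SmoothFamily {n : ℕ} (J : Set ℝ) (F : ℝ → (Fin n → ℝ) → ℝ) : Prop :=
  ContDiffOn ℝ (⊤ : ℕ∞) (fun p : ℝ × (Fin n → ℝ) => F p.1 p.2)
    (J ×ˢ {y : Fin n → ℝ | y ≠ 0})


section Helpers

variable {n : ℕ}

theorem pd_congr_ev {f g : (Fin n → ℝ) → ℝ} {y : Fin n → ℝ} (h : f =ᶠ[nhds y] g) (i : Fin n) :
    pd i f y = pd i g y := by
  unfold pd; rw [h.fderiv_eq]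

theorem pd_eq_of_eqOn {f g : (Fin n → ℝ) → ℝ} {s : Set (Fin n → ℝ)} (hs : IsOpen s)
    (h : ∀ z ∈ s, f z = g z) {y : Fin n → ℝ} (hy : y ∈ s) (i : Fin n) :
    pd i f y = pd i g y :=
  pd_congr_ev (Filter.eventuallyEq_of_mem (hs.mem_nhds hy) h) i

theorem contDiffOn_fderiv_apply {E : Type*} [NormedAddCommGroup E] [NormedSpace ℝ E]
    {f : E → ℝ} {s : Set E} (hs : IsOpen s) (hf : ContDiffOn ℝ (⊤ : ℕ∞) f s) (v : E) :
    ContDiffOn ℝ (⊤ : ℕ∞) (fun x => fderiv ℝ f x v) s := by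
  have h1 : ContDiffOn ℝ (⊤ : ℕ∞) (fun x => fderiv ℝ f x) s :=
    hf.fderiv_of_isOpen hs (by simp)
  exact (ContinuousLinearMap.apply ℝ ℝ v).contDiff.comp_contDiffOn h1

theorem contDiffOn_pd {f : (Fin n → ℝ) → ℝ} {s : Set (Fin n → ℝ)} (hs : IsOpen s)
    (hf : ContDiffOn ℝ (⊤ : ℕ∞) f s) (i : Fin n) : ContDiffOn ℝ (⊤ : ℕ∞) (pd i f) s :=
  contDiffOn_fderiv_apply hs hf _

theorem diffAt_of_contDiffOn {E : Type*} [NormedAddCommGroup E] [NormedSpace ℝ E]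
    {f : E → ℝ} {s : Set E} (hs : IsOpen s) (hf : ContDiffOn ℝ (⊤ : ℕ∞) f s)
    {x : E} (hx : x ∈ s) : DifferentiableAt ℝ f x :=
  ((hf x hx).contDiffAt (hs.mem_nhds hx)).differentiableAt (by simp)

/-- fderiv of the right slice of a two-variable function. -/
theorem fderiv_slice_right {H : ℝ × (Fin n → ℝ) → ℝ} {t : ℝ} {y : Fin n → ℝ}
    (h : DifferentiableAt ℝ H (t, y)) (v : Fin n → ℝ) :
    fderiv ℝ (fun z => H (t, z)) y v = fderiv ℝ H (t, y) (0, v) := by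
  have h2 : HasFDerivAt (fun z : Fin n → ℝ => (t, z))
      (ContinuousLinearMap.inr ℝ ℝ (Fin n → ℝ)) y := hasFDerivAt_prodMk_right t y
  have h3 : HasFDerivAt (fun z => H (t, z))
      ((fderiv ℝ H (t, y)).comp (ContinuousLinearMap.inr ℝ ℝ (Fin n → ℝ))) y :=
    h.hasFDerivAt.comp y h2
  rw [h3.fderiv]; rfl

theorem pd_slice_right {H : ℝ × (Fin n → ℝ) → ℝ} {t : ℝ} {y : Fin n → ℝ}
    (h : DifferentiableAt ℝ H (t, y)) (i : Fin n) :
    pd i (fun z => H (t, z)) y = fderiv ℝ H (t, y) (0, Pi.single i 1) :=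
  fderiv_slice_right h _

/-- deriv of the left slice of a two-variable function. -/
theorem deriv_slice_left {H : ℝ × (Fin n → ℝ) → ℝ} {t : ℝ} {y : Fin n → ℝ}
    (h : DifferentiableAt ℝ H (t, y)) :
    deriv (fun s => H (s, y)) t = fderiv ℝ H (t, y) (1, 0) := by
  have h2 : HasFDerivAt (fun s : ℝ => (s, y)) (ContinuousLinearMap.inl ℝ ℝ (Fin n → ℝ)) t :=
    hasFDerivAt_prodMk_left t y
  have h3 : HasFDerivAt (fun s : ℝ => H (s, y))
      ((fderiv ℝ H (t, y)).comp (ContinuousLinearMap.inl ℝ ℝ (Fin n → ℝ))) t :=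
    h.hasFDerivAt.comp t h2
  have := h3.hasDerivAt
  rw [this.deriv]; rfl

theorem diffAt_slice_left {H : ℝ × (Fin n → ℝ) → ℝ} {t : ℝ} {y : Fin n → ℝ}
    (h : DifferentiableAt ℝ H (t, y)) : DifferentiableAt ℝ (fun s => H (s, y)) t :=
  h.comp t ((hasFDerivAt_prodMk_left t y).differentiableAt)

/-- Clairaut swap: mixed partial of a jointly smooth function. -/
theorem swap_mixed {H : ℝ × (Fin n → ℝ) → ℝ} {U : Set (ℝ × (Fin n → ℝ))} (hU : IsOpen U)
    (hH : ContDiffOn ℝ (⊤ : ℕ∞) H U) {t : ℝ} {y : Fin n → ℝ} (hp : (t, y) ∈ U) (i : Fin n) :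
    fderiv ℝ (fun p => fderiv ℝ H p (0, Pi.single i 1)) (t, y) (1, 0)
      = fderiv ℝ (fun p => fderiv ℝ H p (1, 0)) (t, y) (0, Pi.single i 1) := by
  have hct : ContDiffAt ℝ (⊤ : ℕ∞) H (t, y) := (hH (t, y) hp).contDiffAt (hU.mem_nhds hp)
  have hsym : IsSymmSndFDerivAt ℝ H (t, y) := hct.isSymmSndFDerivAt (by simp only [minSmoothness_of_isRCLikeNormedField]; exact WithTop.coe_le_coe.2 (le_top : (2:ℕ∞) ≤ ⊤))
  have hdf : DifferentiableAt ℝ (fun p => fderiv ℝ H p) (t, y) := by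
    have := (hH.fderiv_of_isOpen hU (m := (⊤ : ℕ∞)) (by simp)) (t, y) hp
    exact (this.contDiffAt (hU.mem_nhds hp)).differentiableAt (by simp)
  have key : ∀ v w : ℝ × (Fin n → ℝ),
      fderiv ℝ (fun p => fderiv ℝ H p w) (t, y) v = fderiv ℝ (fderiv ℝ H) (t, y) v w := by
    intro v w
    have h3 : HasFDerivAt (fun p => fderiv ℝ H p w)
        ((ContinuousLinearMap.apply ℝ ℝ w).comp (fderiv ℝ (fderiv ℝ H) (t, y))) (t, y) :=
      (ContinuousLinearMap.apply ℝ ℝ w).hasFDerivAt.comp (t, y) hdf.hasFDerivAt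
    rw [h3.fderiv]; rfl
  rw [key, key]
  exact hsym _ _

/-- Directional derivative along a line equals fderiv applied to the direction. -/
theorem deriv_line {E : Type*} [NormedAddCommGroup E] [NormedSpace ℝ E]
    {f : E → ℝ} {y v : E} (h : DifferentiableAt ℝ f y) :
    deriv (fun r : ℝ => f (y + r • v)) 0 = fderiv ℝ f y v := by
  have hline : HasDerivAt (fun r : ℝ => y + r • v) v 0 := by
    simpa using ((hasDerivAt_id (0 : ℝ)).smul_const v).const_add y
  have h0 : y + (0 : ℝ) • v = y := by simp
  have hF : HasFDerivAt f (fderiv ℝ f y) (y + (0:ℝ) • v) := by rw [h0]; exact h.hasFDerivAt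
  have h2 : HasDerivAt (fun r : ℝ => f (y + r • v)) (fderiv ℝ f y v) 0 := by
    exact hF.comp_hasDerivAt (0:ℝ) hline
  exact h2.deriv

end Helpers
section PdCalc

variable {n : ℕ}

theorem pd_add {f g : (Fin n → ℝ) → ℝ} {y : Fin n → ℝ}
    (hf : DifferentiableAt ℝ f y) (hg : DifferentiableAt ℝ g y) (i : Fin n) :
    pd i (fun z => f z + g z) y = pd i f y + pd i g y := by
  unfold pd; rw [fderiv_fun_add hf hg]; rfl

theorem pd_const_mul {f : (Fin n → ℝ) → ℝ} {y : Fin n → ℝ}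
    (hf : DifferentiableAt ℝ f y) (c : ℝ) (i : Fin n) :
    pd i (fun z => c * f z) y = c * pd i f y := by
  unfold pd; rw [fderiv_const_mul hf]; rfl

theorem pd_mul {f g : (Fin n → ℝ) → ℝ} {y : Fin n → ℝ}
    (hf : DifferentiableAt ℝ f y) (hg : DifferentiableAt ℝ g y) (i : Fin n) :
    pd i (fun z => f z * g z) y = pd i f y * g y + f y * pd i g y := by
  unfold pd; rw [fderiv_fun_mul hf hg]; simp; ring

theorem pd_sum {ι : Type*} {u : Finset ι} {f : ι → (Fin n → ℝ) → ℝ} {y : Fin n → ℝ}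
    (hf : ∀ j ∈ u, DifferentiableAt ℝ (f j) y) (i : Fin n) :
    pd i (fun z => ∑ j ∈ u, f j z) y = ∑ j ∈ u, pd i (f j) y := by
  unfold pd; rw [fderiv_fun_sum hf]; simp

end PdCalc

section MatrixCalc

variable {n : ℕ} {E : Type*} [NormedAddCommGroup E] [NormedSpace ℝ E]

theorem diffAt_finset_prod {ι : Type*} [DecidableEq ι] {f : ι → E → ℝ} {x : E}
    (u : Finset ι) (h : ∀ i ∈ u, DifferentiableAt ℝ (f i) x) :
    DifferentiableAt ℝ (fun s => ∏ i ∈ u, f i s) x := by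
  induction u using Finset.induction_on with
  | empty => simpa using differentiableAt_const (1 : ℝ)
  | insert a u' hni ih =>
    simp only [Finset.prod_insert hni]
    exact (h a (Finset.mem_insert_self a u')).mul
      (ih fun i hi => h i (Finset.mem_insert_of_mem hi))

theorem differentiableAt_det {A : E → Matrix (Fin n) (Fin n) ℝ} {x : E}
    (h : ∀ i j, DifferentiableAt ℝ (fun s => A s i j) x) :
    DifferentiableAt ℝ (fun s => (A s).det) x := by
  simp only [Matrix.det_apply, Units.smul_def, zsmul_eq_mul]
  apply DifferentiableAt.fun_sum
  intro σ _
  exact (differentiableAt_const _).mul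
    (diffAt_finset_prod Finset.univ (fun j _ => h _ _))

theorem differentiableAt_inv_entry {A : E → Matrix (Fin n) (Fin n) ℝ} {x : E}
    (h : ∀ i j, DifferentiableAt ℝ (fun s => A s i j) x)
    (hdet : (A x).det ≠ 0) (j k : Fin n) :
    DifferentiableAt ℝ (fun s => (A s)⁻¹ j k) x := by
  have heq : ∀ s, (A s)⁻¹ j k = (A s).det⁻¹ * (A s).adjugate j k := by
    intro s
    rw [Matrix.inv_def]
    simp [Ring.inverse_eq_inv']
  simp only [heq]
  apply DifferentiableAt.mul
  · exact (differentiableAt_det h).inv hdet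
  · simp only [Matrix.adjugate_apply]
    apply differentiableAt_det
    intro a b
    rcases eq_or_ne a k with rfl | hak
    · simp only [Matrix.updateRow_self]
      exact differentiableAt_const _
    · simp only [Matrix.updateRow_ne hak]
      exact h a b

end MatrixCalc
theorem deriv_inv_entry {A : ℝ → Matrix (Fin n) (Fin n) ℝ} {t : ℝ}
    (h : ∀ a b, DifferentiableAt ℝ (fun s => A s a b) t)
    (hinv : ∀ᶠ s in nhds t, IsUnit (A s).det) (j k : Fin n) :
    deriv (fun s => (A s)⁻¹ j k) t =
      -∑ a, ∑ m, (A t)⁻¹ j a * deriv (fun s => A s a m) t * (A t)⁻¹ m k := by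
  have hdet : (A t).det ≠ 0 := hinv.self_of_nhds.ne_zero
  have hB : ∀ a b, DifferentiableAt ℝ (fun s => (A s)⁻¹ a b) t :=
    fun a b => differentiableAt_inv_entry h hdet a b
  -- the identity A⁻¹ * A = 1 near t, entrywise
  have E1 : ∀ k' : Fin n, deriv (fun s => ∑ a, (A s)⁻¹ j a * A s a k') t = 0 := by
    intro k'
    have hconst : (fun s => ∑ a, (A s)⁻¹ j a * A s a k')
        =ᶠ[nhds t] (fun _ => if j = k' then (1 : ℝ) else 0) := by
      filter_upwards [hinv] with s hs
      have h1 : (A s)⁻¹ * A s = 1 := Matrix.nonsing_inv_mul (A s) hs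
      have h2 := congrFun (congrFun h1 j) k'
      rw [Matrix.mul_apply] at h2
      rw [h2, Matrix.one_apply]
    rw [hconst.deriv_eq]
    simp
  have E2 : ∀ k' : Fin n,
      ∑ a, (deriv (fun s => (A s)⁻¹ j a) t * A t a k'
        + (A t)⁻¹ j a * deriv (fun s => A s a k') t) = 0 := by
    intro k'
    rw [← E1 k', deriv_fun_sum (fun a _ => ((hB j a).fun_mul (h a k')))]
    exact Finset.sum_congr rfl fun a _ => (deriv_fun_mul (hB j a) (h a k')).symm
  have h2 : ∀ a m : Fin n, ∑ k', A t a k' * (A t)⁻¹ k' m = if a = m then (1 : ℝ) else 0 := by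
    intro a m
    have h1 : A t * (A t)⁻¹ = 1 := Matrix.mul_nonsing_inv (A t) hinv.self_of_nhds
    have := congrFun (congrFun h1 a) m
    rw [Matrix.mul_apply] at this
    rw [this, Matrix.one_apply]
  set D : Fin n → ℝ := fun a => deriv (fun s => (A s)⁻¹ j a) t with hD
  set A' : Fin n → Fin n → ℝ := fun a b => deriv (fun s => A s a b) t with hA'
  have E3 : ∀ k' : Fin n, ∑ a, D a * A t a k' = -∑ a, (A t)⁻¹ j a * A' a k' := by
    intro k'
    have := E2 k'
    rw [Finset.sum_add_distrib] at this
    linarith [this]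
  calc deriv (fun s => (A s)⁻¹ j k) t = D k := rfl
    _ = ∑ a, D a * (if a = k then (1:ℝ) else 0) := by
        simp [mul_ite]
    _ = ∑ a, D a * (∑ k', A t a k' * (A t)⁻¹ k' k) := by
        exact Finset.sum_congr rfl fun a _ => by rw [h2]
    _ = ∑ k', (∑ a, D a * A t a k') * (A t)⁻¹ k' k := by
        simp only [Finset.mul_sum, Finset.sum_mul]
        rw [Finset.sum_comm]
        exact Finset.sum_congr rfl fun a _ => Finset.sum_congr rfl fun k' _ => by ring
    _ = ∑ k', (-∑ a, (A t)⁻¹ j a * A' a k') * (A t)⁻¹ k' k := by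
        exact Finset.sum_congr rfl fun k' _ => by rw [E3]
    _ = -∑ a, ∑ m, (A t)⁻¹ j a * A' a m * (A t)⁻¹ m k := by
        simp only [neg_mul, Finset.sum_mul, Finset.sum_neg_distrib, ← Finset.sum_neg_distrib]
        rw [Finset.sum_comm]
theorem fderiv_apply_const {E : Type*} [NormedAddCommGroup E] [NormedSpace ℝ E]
    {f : E → E →L[ℝ] ℝ} {x : E} (h : DifferentiableAt ℝ f x) (v w : E) :
    fderiv ℝ (fun z => f z w) x v = fderiv ℝ f x v w := by
  have h3 : HasFDerivAt (fun z => f z w)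
      ((ContinuousLinearMap.apply ℝ ℝ w).comp (fderiv ℝ f x)) x :=
    (ContinuousLinearMap.apply ℝ ℝ w).hasFDerivAt.comp x h.hasFDerivAt
  rw [h3.fderiv]; rfl

theorem pd_comm {f : (Fin n → ℝ) → ℝ} {s : Set (Fin n → ℝ)} (hs : IsOpen s)
    (hf : ContDiffOn ℝ (⊤ : ℕ∞) f s) {y : Fin n → ℝ} (hy : y ∈ s) (j k : Fin n) :
    pd j (pd k f) y = pd k (pd j f) y := by
  have hsym : IsSymmSndFDerivAt ℝ f y :=
    ((hf y hy).contDiffAt (hs.mem_nhds hy)).isSymmSndFDerivAt (by simp only [minSmoothness_of_isRCLikeNormedField]; exact WithTop.coe_le_coe.2 (le_top : (2:ℕ∞) ≤ ⊤))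
  have hdf : DifferentiableAt ℝ (fderiv ℝ f) y := by
    have := (hf.fderiv_of_isOpen hs (m := (⊤ : ℕ∞)) (by simp)) y hy
    exact (this.contDiffAt (hs.mem_nhds hy)).differentiableAt (by simp)
  show fderiv ℝ (fun z => fderiv ℝ f z (Pi.single k 1)) y (Pi.single j 1)
      = fderiv ℝ (fun z => fderiv ℝ f z (Pi.single j 1)) y (Pi.single k 1)
  rw [fderiv_apply_const hdf, fderiv_apply_const hdf]
  exact hsym _ _

/-- Positive definiteness implies the fundamental matrix has nonzero determinant. -/
theorem det_ne_zero_of_posdef {M : Matrix (Fin n) (Fin n) ℝ}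
    (h : ∀ v : Fin n → ℝ, v ≠ 0 → 0 < ∑ i, ∑ j, M i j * v i * v j) :
    M.det ≠ 0 := by
  intro hdet
  obtain ⟨v, hv, hMv⟩ := (Matrix.exists_mulVec_eq_zero_iff).2 hdet
  have h1 : ∑ i, ∑ j, M i j * v i * v j = 0 := by
    have : ∀ i : Fin n, ∑ j, M i j * v i * v j = v i * (M.mulVec v i) := by
      intro i
      rw [Matrix.mulVec, dotProduct, Finset.mul_sum]
      exact Finset.sum_congr rfl fun j _ => by ring
    rw [Finset.sum_congr rfl fun i _ => this i]
    simp [hMv]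
  exact absurd h1 (ne_of_gt (h v hv))
section Joint

variable {n : ℕ}

/-- The squared norm as a joint function of `(t, y)`. -/
def sq2 (F : ℝ → (Fin n → ℝ) → ℝ) : ℝ × (Fin n → ℝ) → ℝ := fun p => F p.1 p.2 ^ 2

/-- Second `y`-derivatives of `sq2` as a joint function: `2 g_{jk}(t, y)`. -/
def Qf (F : ℝ → (Fin n → ℝ) → ℝ) (j k : Fin n) : ℝ × (Fin n → ℝ) → ℝ :=
  fun p => fderiv ℝ (fun q => fderiv ℝ (sq2 F) q (0, Pi.single k 1)) p (0, Pi.single j 1)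

variable {F : ℝ → (Fin n → ℝ) → ℝ} {U : Set (ℝ × (Fin n → ℝ))}

theorem Qf_smooth (hU : IsOpen U) (hsm : ContDiffOn ℝ (⊤ : ℕ∞) (sq2 F) U) (j k : Fin n) :
    ContDiffOn ℝ (⊤ : ℕ∞) (Qf F j k) U :=
  contDiffOn_fderiv_apply hU (contDiffOn_fderiv_apply hU hsm _) _

theorem slice_open (hU : IsOpen U) (t : ℝ) : IsOpen {z : Fin n → ℝ | (t, z) ∈ U} :=
  hU.preimage (Continuous.prodMk_right t)

theorem pd_pd_eq_Qf (hU : IsOpen U) (hsm : ContDiffOn ℝ (⊤ : ℕ∞) (sq2 F) U) (j k : Fin n)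
    {t : ℝ} {y : Fin n → ℝ} (hp : (t, y) ∈ U) :
    pd j (pd k (fun w => F t w ^ 2)) y = Qf F j k (t, y) := by
  have hP : ContDiffOn ℝ (⊤ : ℕ∞) (fun q => fderiv ℝ (sq2 F) q (0, Pi.single k 1)) U :=
    contDiffOn_fderiv_apply hU hsm _
  have e1 : ∀ z ∈ {z : Fin n → ℝ | (t, z) ∈ U},
      pd k (fun w => F t w ^ 2) z = fderiv ℝ (sq2 F) (t, z) (0, Pi.single k 1) := by
    intro z hz
    exact pd_slice_right (diffAt_of_contDiffOn hU hsm hz) k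
  have e2 : pd j (pd k (fun w => F t w ^ 2)) y
      = pd j (fun z => fderiv ℝ (sq2 F) (t, z) (0, Pi.single k 1)) y :=
    pd_eq_of_eqOn (slice_open hU t) e1 hp j
  rw [e2]
  exact pd_slice_right (diffAt_of_contDiffOn hU hP hp) j

theorem gT_eq_Qf (hU : IsOpen U) (hsm : ContDiffOn ℝ (⊤ : ℕ∞) (sq2 F) U) (j k : Fin n)
    {t : ℝ} {y : Fin n → ℝ} (hp : (t, y) ∈ U) :
    gT (F t) j k y = (1 / 2 : ℝ) * Qf F j k (t, y) := by
  show (1 / 2 : ℝ) * pd j (pd k (fun w => F t w ^ 2)) y = _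
  rw [pd_pd_eq_Qf hU hsm j k hp]

theorem cartanT_eq_fderiv_Qf (hU : IsOpen U) (hsm : ContDiffOn ℝ (⊤ : ℕ∞) (sq2 F) U) (i j k : Fin n)
    {t : ℝ} {y : Fin n → ℝ} (hp : (t, y) ∈ U) :
    cartanT (F t) i j k y = (1 / 4 : ℝ) * fderiv ℝ (Qf F j k) (t, y) (0, Pi.single i 1) := by
  have e1 : ∀ z ∈ {z : Fin n → ℝ | (t, z) ∈ U},
      pd j (pd k (fun w => F t w ^ 2)) z = Qf F j k (t, z) :=
    fun z hz => pd_pd_eq_Qf hU hsm j k hz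
  show (1 / 4 : ℝ) * pd i (pd j (pd k (fun w => F t w ^ 2))) y = _
  rw [pd_eq_of_eqOn (slice_open hU t) e1 hp i,
    pd_slice_right (diffAt_of_contDiffOn hU (Qf_smooth hU hsm j k) hp) i]

theorem gT_t_diffAt (hU : IsOpen U) (hsm : ContDiffOn ℝ (⊤ : ℕ∞) (sq2 F) U) (j k : Fin n)
    {t : ℝ} {y : Fin n → ℝ} (hp : (t, y) ∈ U) :
    DifferentiableAt ℝ (fun s => gT (F s) j k y) t := by
  have hT : IsOpen {s : ℝ | (s, y) ∈ U} := hU.preimage (continuous_id.prodMk continuous_const)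
  have he : (fun s => gT (F s) j k y) =ᶠ[nhds t] (fun s => (1 / 2 : ℝ) * Qf F j k (s, y)) :=
    Filter.eventuallyEq_of_mem (hT.mem_nhds hp) fun s hs => gT_eq_Qf hU hsm j k hs
  rw [he.differentiableAt_iff]
  exact (diffAt_slice_left (diffAt_of_contDiffOn hU (Qf_smooth hU hsm j k) hp)).const_mul _

theorem gT_t_deriv (hU : IsOpen U) (hsm : ContDiffOn ℝ (⊤ : ℕ∞) (sq2 F) U) (j k : Fin n)
    {t : ℝ} {y : Fin n → ℝ} (hp : (t, y) ∈ U) :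
    deriv (fun s => gT (F s) j k y) t = (1 / 2 : ℝ) * fderiv ℝ (Qf F j k) (t, y) (1, 0) := by
  have hT : IsOpen {s : ℝ | (s, y) ∈ U} := hU.preimage (continuous_id.prodMk continuous_const)
  have he : (fun s => gT (F s) j k y) =ᶠ[nhds t] (fun s => (1 / 2 : ℝ) * Qf F j k (s, y)) :=
    Filter.eventuallyEq_of_mem (hT.mem_nhds hp) fun s hs => gT_eq_Qf hU hsm j k hs
  have hq : DifferentiableAt ℝ (fun s => Qf F j k (s, y)) t :=
    diffAt_slice_left (diffAt_of_contDiffOn hU (Qf_smooth hU hsm j k) hp)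
  rw [he.deriv_eq, deriv_const_mul _ hq,
    deriv_slice_left (diffAt_of_contDiffOn hU (Qf_smooth hU hsm j k) hp)]

theorem cartanT_t_diffAt (hU : IsOpen U) (hsm : ContDiffOn ℝ (⊤ : ℕ∞) (sq2 F) U) (i j k : Fin n)
    {t : ℝ} {y : Fin n → ℝ} (hp : (t, y) ∈ U) :
    DifferentiableAt ℝ (fun s => cartanT (F s) i j k y) t := by
  have hT : IsOpen {s : ℝ | (s, y) ∈ U} := hU.preimage (continuous_id.prodMk continuous_const)
  have hCq : ContDiffOn ℝ (⊤ : ℕ∞) (fun p => fderiv ℝ (Qf F j k) p (0, Pi.single i 1)) U :=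
    contDiffOn_fderiv_apply hU (Qf_smooth hU hsm j k) _
  have he : (fun s => cartanT (F s) i j k y) =ᶠ[nhds t]
      (fun s => (1 / 4 : ℝ) * fderiv ℝ (Qf F j k) (s, y) (0, Pi.single i 1)) :=
    Filter.eventuallyEq_of_mem (hT.mem_nhds hp) fun s hs => cartanT_eq_fderiv_Qf hU hsm i j k hs
  rw [he.differentiableAt_iff]
  exact (diffAt_slice_left (diffAt_of_contDiffOn hU hCq hp)).const_mul _

theorem cartanT_t_deriv (hU : IsOpen U) (hsm : ContDiffOn ℝ (⊤ : ℕ∞) (sq2 F) U) (i j k : Fin n)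
    {t : ℝ} {y : Fin n → ℝ} (hp : (t, y) ∈ U) :
    deriv (fun s => cartanT (F s) i j k y) t
      = (1 / 4 : ℝ) * pd i (fun z => fderiv ℝ (Qf F j k) (t, z) (1, 0)) y := by
  have hT : IsOpen {s : ℝ | (s, y) ∈ U} := hU.preimage (continuous_id.prodMk continuous_const)
  have hCq : ContDiffOn ℝ (⊤ : ℕ∞) (fun p => fderiv ℝ (Qf F j k) p (0, Pi.single i 1)) U :=
    contDiffOn_fderiv_apply hU (Qf_smooth hU hsm j k) _
  have hW : ContDiffOn ℝ (⊤ : ℕ∞) (fun p => fderiv ℝ (Qf F j k) p (1, 0)) U :=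
    contDiffOn_fderiv_apply hU (Qf_smooth hU hsm j k) _
  have he : (fun s => cartanT (F s) i j k y) =ᶠ[nhds t]
      (fun s => (1 / 4 : ℝ) * fderiv ℝ (Qf F j k) (s, y) (0, Pi.single i 1)) :=
    Filter.eventuallyEq_of_mem (hT.mem_nhds hp) fun s hs => cartanT_eq_fderiv_Qf hU hsm i j k hs
  rw [he.deriv_eq, deriv_const_mul _ (diffAt_slice_left (diffAt_of_contDiffOn hU hCq hp)),
    deriv_slice_left (diffAt_of_contDiffOn hU hCq hp),
    swap_mixed hU (Qf_smooth hU hsm j k) hp i,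
    ← pd_slice_right (diffAt_of_contDiffOn hU hW hp) i]

end Joint
section SingleTime

variable {n : ℕ} {f r : (Fin n → ℝ) → ℝ} {s : Set (Fin n → ℝ)}

theorem gT_smooth (hs : IsOpen s) (hf : ContDiffOn ℝ (⊤ : ℕ∞) f s) (j k : Fin n) :
    ContDiffOn ℝ (⊤ : ℕ∞) (gT f j k) s := by
  have h2 : ContDiffOn ℝ (⊤ : ℕ∞) (fun z => f z ^ 2) s := hf.pow 2
  exact contDiffOn_const.mul (contDiffOn_pd hs (contDiffOn_pd hs h2 k) j)

theorem RicT_smooth (hs : IsOpen s) (hf : ContDiffOn ℝ (⊤ : ℕ∞) f s) (hr : ContDiffOn ℝ (⊤ : ℕ∞) r s)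
    (j k : Fin n) : ContDiffOn ℝ (⊤ : ℕ∞) (RicT f r j k) s := by
  have h2 : ContDiffOn ℝ (⊤ : ℕ∞) (fun z => r z * f z ^ 2) s := hr.mul (hf.pow 2)
  exact contDiffOn_const.mul (contDiffOn_pd hs (contDiffOn_pd hs h2 k) j)

theorem pd_gT_eq_cartan (hs : IsOpen s) (hf : ContDiffOn ℝ (⊤ : ℕ∞) f s) {y : Fin n → ℝ}
    (hy : y ∈ s) (i j k : Fin n) : pd i (gT f j k) y = 2 * cartanT f i j k y := by
  have hd : DifferentiableAt ℝ (pd j (pd k (fun z => f z ^ 2))) y :=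
    diffAt_of_contDiffOn hs (contDiffOn_pd hs (contDiffOn_pd hs (hf.pow 2) k) j) hy
  show pd i (fun z => (1 / 2 : ℝ) * pd j (pd k (fun z => f z ^ 2)) z) y = _
  rw [pd_const_mul hd]
  show _ = 2 * ((1 / 4 : ℝ) * pd i (pd j (pd k (fun z => f z ^ 2))) y)
  ring

theorem gT_symm_pt (hs : IsOpen s) (hf : ContDiffOn ℝ (⊤ : ℕ∞) f s) {y : Fin n → ℝ}
    (hy : y ∈ s) (j k : Fin n) : gT f j k y = gT f k j y := by
  show (1 / 2 : ℝ) * pd j (pd k (fun z => f z ^ 2)) y = (1 / 2 : ℝ) * _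
  rw [pd_comm hs (hf.pow 2) hy]

theorem gMat_det_ne_zero {y : Fin n → ℝ}
    (hpos : ∀ v : Fin n → ℝ, v ≠ 0 → 0 < ∑ i, ∑ j, gT f i j y * v i * v j) :
    (gMat f y).det ≠ 0 :=
  det_ne_zero_of_posdef hpos

theorem gT_mul_gInv {y : Fin n → ℝ} (hdet : (gMat f y).det ≠ 0) (j k : Fin n) :
    ∑ a, gT f j a y * gInv f a k y = if j = k then (1 : ℝ) else 0 := by
  have h1 : gMat f y * (gMat f y)⁻¹ = 1 :=
    Matrix.mul_nonsing_inv _ (isUnit_iff_ne_zero.2 hdet)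
  have h2 := congrFun (congrFun h1 j) k
  rw [Matrix.mul_apply] at h2
  rw [show (∑ a, gT f j a y * gInv f a k y) = ∑ a, gMat f y j a * (gMat f y)⁻¹ a k from rfl,
    h2, Matrix.one_apply]

theorem gInv_symm_pt {y : Fin n → ℝ} (hsymm : ∀ a b : Fin n, gT f a b y = gT f b a y)
    (j k : Fin n) : gInv f j k y = gInv f k j y := by
  have h1 : (gMat f y).transpose = gMat f y := by
    ext a b
    exact hsymm b a
  show (gMat f y)⁻¹ j k = (gMat f y)⁻¹ k j
  conv_lhs => rw [← h1]
  rw [← Matrix.transpose_nonsing_inv]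
  rfl

theorem gInv_diffAt (hs : IsOpen s) (hf : ContDiffOn ℝ (⊤ : ℕ∞) f s) {y : Fin n → ℝ} (hy : y ∈ s)
    (hdet : (gMat f y).det ≠ 0) (j k : Fin n) :
    DifferentiableAt ℝ (gInv f j k) y := by
  have h := differentiableAt_inv_entry (A := gMat f) (x := y)
    (fun a b' => diffAt_of_contDiffOn hs (gT_smooth hs hf a b') hy) hdet j k
  exact h

theorem pd_gInv (hs : IsOpen s) (hf : ContDiffOn ℝ (⊤ : ℕ∞) f s)
    (hdet : ∀ z ∈ s, (gMat f z).det ≠ 0) {y : Fin n → ℝ} (hy : y ∈ s) (i j k : Fin n) :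
    pd i (gInv f j k) y
      = -∑ a, ∑ m, gInv f j a y * (2 * cartanT f i a m y) * gInv f m k y := by
  set v : Fin n → ℝ := Pi.single i 1 with hv
  have line0 : y + (0 : ℝ) • v = y := by simp
  have hinvd : DifferentiableAt ℝ (gInv f j k) y := gInv_diffAt hs hf hy (hdet y hy) j k
  have step1 : pd i (gInv f j k) y = deriv (fun r : ℝ => gInv f j k (y + r • v)) 0 :=
    (deriv_line hinvd).symm
  set A : ℝ → Matrix (Fin n) (Fin n) ℝ := fun r => gMat f (y + r • v) with hA
  have hlineD : ∀ (g : (Fin n → ℝ) → ℝ), DifferentiableAt ℝ g y →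
      DifferentiableAt ℝ (fun r : ℝ => g (y + r • v)) 0 := by
    intro g hg
    have hl : DifferentiableAt ℝ (fun r : ℝ => y + r • v) 0 :=
      (differentiable_id.smul_const v).differentiableAt.const_add y
    have hg' : DifferentiableAt ℝ g (y + (0 : ℝ) • v) := by rw [line0]; exact hg
    exact hg'.comp 0 hl
  have hAent : ∀ a b', DifferentiableAt ℝ (fun r => A r a b') 0 :=
    fun a b' => hlineD _ (diffAt_of_contDiffOn hs (gT_smooth hs hf a b') hy)
  have hev : ∀ᶠ r in nhds 0, IsUnit (A r).det := by
    have hop : IsOpen {r : ℝ | y + r • v ∈ s} :=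
      hs.preimage (by fun_prop)
    have h0 : (0 : ℝ) ∈ {r : ℝ | y + r • v ∈ s} := by
      show y + (0 : ℝ) • v ∈ s; rw [line0]; exact hy
    filter_upwards [hop.mem_nhds h0] with r hr
    exact isUnit_iff_ne_zero.2 (hdet _ hr)
  have key := deriv_inv_entry hAent hev j k
  have hA0 : A 0 = gMat f y := by rw [hA]; simp only [line0]
  rw [step1]
  rw [show (fun r : ℝ => gInv f j k (y + r • v)) = fun r => (A r)⁻¹ j k from rfl, key, hA0]
  congr 1
  apply Finset.sum_congr rfl
  intro a _
  apply Finset.sum_congr rfl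
  intro m _
  have : deriv (fun r => A r a m) 0 = 2 * cartanT f i a m y := by
    have h1 : deriv (fun r : ℝ => gT f a m (y + r • v)) 0 = fderiv ℝ (gT f a m) y v :=
      deriv_line (diffAt_of_contDiffOn hs (gT_smooth hs hf a m) hy)
    rw [show (fun r => A r a m) = fun r : ℝ => gT f a m (y + r • v) from rfl, h1]
    exact pd_gT_eq_cartan hs hf hy i a m
  rw [this]
  rfl

end SingleTime
section Algebra

theorem sum_comm3' {α M : Type*} [AddCommMonoid M] [Fintype α]
    (g : α → α → α → M) :
    ∑ x, ∑ y, ∑ z, g x y z = ∑ y, ∑ z, ∑ x, g x y z :=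
  calc ∑ x, ∑ y, ∑ z, g x y z = ∑ y, ∑ x, ∑ z, g x y z := Finset.sum_comm
    _ = ∑ y, ∑ z, ∑ x, g x y z := Finset.sum_congr rfl fun _ _ => Finset.sum_comm

theorem sum_comm4 {α M : Type*} [AddCommMonoid M] [Fintype α]
    (f : α → α → α → α → M) :
    ∑ j, ∑ k, ∑ a, ∑ m, f j k a m = ∑ a, ∑ m, ∑ j, ∑ k, f j k a m :=
  calc ∑ j, ∑ k, ∑ a, ∑ m, f j k a m
      = ∑ j, ∑ a, ∑ m, ∑ k, f j k a m :=
        Finset.sum_congr rfl fun j _ => sum_comm3' _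
    _ = ∑ a, ∑ j, ∑ m, ∑ k, f j k a m := Finset.sum_comm
    _ = ∑ a, ∑ m, ∑ j, ∑ k, f j k a m := by
        refine Finset.sum_congr rfl fun a _ => Finset.sum_comm.trans ?_
        refine Finset.sum_congr rfl fun m _ => Finset.sum_congr rfl fun j _ => ?_
        rfl

theorem final_algebra {n : ℕ} (GI G CC Rc Pr : Fin n → Fin n → ℝ) (c : ℝ)
    (hsym : ∀ a b : Fin n, GI a b = GI b a)
    (hid : ∀ a m : Fin n, ∑ k, G a k * GI k m = if a = m then (1 : ℝ) else 0) :
    ∑ j, ∑ k, ((-∑ a, ∑ m, GI j a * (-2 * Rc a m + 2 * c * G a m) * GI m k) * CC j k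
        + GI j k * (-Pr j k + 2 * c * CC j k))
      = -∑ j, ∑ k, ((-∑ a, ∑ m, GI j a * (2 * CC a m) * GI m k) * Rc j k
        + GI j k * Pr j k) := by
  have hG : ∀ j k : Fin n, ∑ a, ∑ m, GI j a * G a m * GI m k = GI j k := by
    intro j k
    have h1 : ∀ a, ∑ m, GI j a * G a m * GI m k = GI j a * (if a = k then (1 : ℝ) else 0) := by
      intro a
      rw [← hid a k, Finset.mul_sum]
      exact Finset.sum_congr rfl fun m _ => by ring
    rw [Finset.sum_congr rfl fun a _ => h1 a]
    simp
  have hRC : ∑ j, ∑ k, (∑ a, ∑ m, GI j a * Rc a m * GI m k) * CC j k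
      = ∑ j, ∑ k, (∑ a, ∑ m, GI j a * CC a m * GI m k) * Rc j k := by
    have l1 : ∑ j, ∑ k, (∑ a, ∑ m, GI j a * Rc a m * GI m k) * CC j k
        = ∑ j, ∑ k, ∑ a, ∑ m, GI j a * Rc a m * GI m k * CC j k := by
      refine Finset.sum_congr rfl fun j _ => Finset.sum_congr rfl fun k _ => ?_
      rw [Finset.sum_mul]
      exact Finset.sum_congr rfl fun a _ => by rw [Finset.sum_mul]
    have l2 : ∑ j, ∑ k, (∑ a, ∑ m, GI j a * CC a m * GI m k) * Rc j k
        = ∑ j, ∑ k, ∑ a, ∑ m, GI j a * CC a m * GI m k * Rc j k := by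
      refine Finset.sum_congr rfl fun j _ => Finset.sum_congr rfl fun k _ => ?_
      rw [Finset.sum_mul]
      exact Finset.sum_congr rfl fun a _ => by rw [Finset.sum_mul]
    rw [l1, l2, sum_comm4 (fun j k a m => GI j a * CC a m * GI m k * Rc j k)]
    refine Finset.sum_congr rfl fun j _ => Finset.sum_congr rfl fun k _ => ?_
    refine Finset.sum_congr rfl fun a _ => Finset.sum_congr rfl fun m _ => ?_
    rw [hsym a j, hsym k m]
    ring
  have e1 : ∀ j k : Fin n, (-∑ a, ∑ m, GI j a * (-2 * Rc a m + 2 * c * G a m) * GI m k)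
      = 2 * (∑ a, ∑ m, GI j a * Rc a m * GI m k) - 2 * c * GI j k := by
    intro j k
    rw [show (∑ a, ∑ m, GI j a * (-2 * Rc a m + 2 * c * G a m) * GI m k)
        = ∑ a, ∑ m, ((-2) * (GI j a * Rc a m * GI m k)
          + (2 * c) * (GI j a * G a m * GI m k)) from
      Finset.sum_congr rfl fun a _ => Finset.sum_congr rfl fun m _ => by ring]
    simp only [Finset.sum_add_distrib, ← Finset.mul_sum]
    rw [hG]
    ring
  have e2 : ∀ j k : Fin n, (-∑ a, ∑ m, GI j a * (2 * CC a m) * GI m k)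
      = -(2 * (∑ a, ∑ m, GI j a * CC a m * GI m k)) := by
    intro j k
    rw [show (∑ a, ∑ m, GI j a * (2 * CC a m) * GI m k)
        = ∑ a, ∑ m, 2 * (GI j a * CC a m * GI m k) from
      Finset.sum_congr rfl fun a _ => Finset.sum_congr rfl fun m _ => by ring]
    simp only [← Finset.mul_sum]
  have lhs_eq : ∑ j, ∑ k, ((-∑ a, ∑ m, GI j a * (-2 * Rc a m + 2 * c * G a m) * GI m k) * CC j k
        + GI j k * (-Pr j k + 2 * c * CC j k))
      = ∑ j, ∑ k, (2 * ((∑ a, ∑ m, GI j a * Rc a m * GI m k) * CC j k)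
        - GI j k * Pr j k) := by
    refine Finset.sum_congr rfl fun j _ => Finset.sum_congr rfl fun k _ => ?_
    rw [e1 j k]
    ring
  have rhs_eq : -∑ j, ∑ k, ((-∑ a, ∑ m, GI j a * (2 * CC a m) * GI m k) * Rc j k
        + GI j k * Pr j k)
      = ∑ j, ∑ k, (2 * ((∑ a, ∑ m, GI j a * CC a m * GI m k) * Rc j k)
        - GI j k * Pr j k) := by
    rw [← Finset.sum_neg_distrib]
    refine Finset.sum_congr rfl fun j _ => ?_
    rw [← Finset.sum_neg_distrib]
    refine Finset.sum_congr rfl fun k _ => ?_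
    rw [e2 j k]
    ring
  rw [lhs_eq, rhs_eq]
  simp only [Finset.sum_sub_distrib, ← Finset.mul_sum]
  rw [hRC]

end Algebra
theorem mean_cartan_evolution_normalized
    {n : ℕ} (a b : ℝ) (F R : ℝ → (Fin n → ℝ) → ℝ) (c : ℝ → ℝ)
    (hF : SmoothFamily (Set.Ioo a b) F)
    (hMink : ∀ t ∈ Set.Ioo a b, IsMinkowski (F t))
    (hR : SmoothFamily (Set.Ioo a b) R)
    (hRhom : ∀ t ∈ Set.Ioo a b, ∀ y : Fin n → ℝ, y ≠ 0 →
      ∀ lam : ℝ, 0 < lam → R t (lam • y) = R t y)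
    (hc : ContDiffOn ℝ (⊤ : ℕ∞) c (Set.Ioo a b))
    (hflow : ∀ t ∈ Set.Ioo a b, ∀ y : Fin n → ℝ, y ≠ 0 → ∀ i j : Fin n,
      deriv (fun s => gT (F s) i j y) t =
        -2 * RicT (F t) (R t) i j y + 2 * c t * gT (F t) i j y) :
    ∀ t ∈ Set.Ioo a b, ∀ y : Fin n → ℝ, y ≠ 0 → ∀ i : Fin n,
      deriv (fun s => mC (F s) i y) t = - pd i (rho (F t) (R t)) y := by
  intro t ht y hy i
  classical
  have hOopen : IsOpen {z : Fin n → ℝ | z ≠ 0} := isOpen_ne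
  set O : Set (Fin n → ℝ) := {z : Fin n → ℝ | z ≠ 0} with hOdef
  set U : Set (ℝ × (Fin n → ℝ)) := Set.Ioo a b ×ˢ O with hUdef
  have hUopen : IsOpen U := isOpen_Ioo.prod hOopen
  have hsm : ContDiffOn ℝ (⊤ : ℕ∞) (sq2 F) U := by
    have h1 : ContDiffOn ℝ (⊤ : ℕ∞) (fun p : ℝ × (Fin n → ℝ) => F p.1 p.2) U := hF
    exact h1.pow 2
  have hy' : y ∈ O := hy
  have hp : (t, y) ∈ U := ⟨ht, hy'⟩
  have hFt : ContDiffOn ℝ (⊤ : ℕ∞) (F t) O := (hMink t ht).1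
  have hRt : ContDiffOn ℝ (⊤ : ℕ∞) (R t) O := by
    have h1 : ContDiffOn ℝ (⊤ : ℕ∞) (fun p : ℝ × (Fin n → ℝ) => R p.1 p.2) U := hR
    have h2 : ContDiffOn ℝ (⊤ : ℕ∞) (fun z : Fin n → ℝ => ((t, z) : ℝ × (Fin n → ℝ))) O :=
      (contDiff_const.prodMk contDiff_id).contDiffOn
    exact h1.comp h2 (fun z hz => ⟨ht, hz⟩)
  have hposd : ∀ s ∈ Set.Ioo a b, ∀ z ∈ O, (gMat (F s) z).det ≠ 0 := by
    intro s hs z hz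
    exact gMat_det_ne_zero (fun v hv => (hMink s hs).2.2.2 z hz v hv)
  have hdety : (gMat (F t) y).det ≠ 0 := hposd t ht y hy'
  -- differentiability in t
  have hgTd : ∀ a' b' : Fin n, DifferentiableAt ℝ (fun s => gT (F s) a' b' y) t :=
    fun a' b' => gT_t_diffAt hUopen hsm a' b' hp
  have hinvEv : ∀ᶠ s in nhds t, IsUnit (gMat (F s) y).det := by
    filter_upwards [Ioo_mem_nhds ht.1 ht.2] with s hs
    exact isUnit_iff_ne_zero.2 (hposd s hs y hy')
  have hgInvD : ∀ j' k' : Fin n, DifferentiableAt ℝ (fun s => gInv (F s) j' k' y) t :=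
    fun j' k' => differentiableAt_inv_entry (A := fun s => gMat (F s) y) hgTd hdety j' k'
  have hCd : ∀ j' k' : Fin n, DifferentiableAt ℝ (fun s => cartanT (F s) i j' k' y) t :=
    fun j' k' => cartanT_t_diffAt hUopen hsm i j' k' hp
  -- deriv of gInv in t
  have hgInvDeriv : ∀ j' k' : Fin n, deriv (fun s => gInv (F s) j' k' y) t
      = -∑ a', ∑ m, gInv (F t) j' a' y
          * (-2 * RicT (F t) (R t) a' m y + 2 * c t * gT (F t) a' m y)
          * gInv (F t) m k' y := by
    intro j' k'
    have h0 := deriv_inv_entry (A := fun s => gMat (F s) y) hgTd hinvEv j' k'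
    have hee : (fun s => gInv (F s) j' k' y) = (fun s => (gMat (F s) y)⁻¹ j' k') := rfl
    rw [hee, h0]
    congr 1
    refine Finset.sum_congr rfl fun a' _ => Finset.sum_congr rfl fun m _ => ?_
    rw [show deriv (fun s => gMat (F s) y a' m) t = deriv (fun s => gT (F s) a' m y) t from rfl,
      hflow t ht y hy a' m]
    rfl
  -- deriv of cartanT in t
  have hCderiv : ∀ j' k' : Fin n, deriv (fun s => cartanT (F s) i j' k' y) t
      = -pd i (RicT (F t) (R t) j' k') y + 2 * c t * cartanT (F t) i j' k' y := by
    intro j' k'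
    rw [cartanT_t_deriv hUopen hsm i j' k' hp]
    have hWeq : ∀ z ∈ O, fderiv ℝ (Qf F j' k') (t, z) (1, 0)
        = -4 * RicT (F t) (R t) j' k' z + (4 * c t) * gT (F t) j' k' z := by
      intro z hz
      have h1 := gT_t_deriv hUopen hsm j' k' (show ((t, z) : ℝ × (Fin n → ℝ)) ∈ U from ⟨ht, hz⟩)
      have h2 := hflow t ht z hz j' k'
      rw [h1] at h2
      linarith
    rw [pd_eq_of_eqOn hOopen hWeq hy' i]
    have hRicD : DifferentiableAt ℝ (RicT (F t) (R t) j' k') y :=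
      diffAt_of_contDiffOn hOopen (RicT_smooth hOopen hFt hRt j' k') hy'
    have hgD : DifferentiableAt ℝ (gT (F t) j' k') y :=
      diffAt_of_contDiffOn hOopen (gT_smooth hOopen hFt j' k') hy'
    rw [pd_add (hRicD.const_mul (-4)) (hgD.const_mul (4 * c t)) i,
      pd_const_mul hRicD (-4) i, pd_const_mul hgD (4 * c t) i,
      pd_gT_eq_cartan hOopen hFt hy' i j' k']
    ring
  -- symmetry and inverse identities at (t, y)
  have hsymm : ∀ a' b' : Fin n, gT (F t) a' b' y = gT (F t) b' a' y :=
    fun a' b' => gT_symm_pt hOopen hFt hy' a' b'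
  have hGIsym : ∀ a' b' : Fin n, gInv (F t) a' b' y = gInv (F t) b' a' y :=
    fun a' b' => gInv_symm_pt hsymm a' b'
  have hid : ∀ a' m : Fin n,
      ∑ k', gT (F t) a' k' y * gInv (F t) k' m y = if a' = m then (1 : ℝ) else 0 :=
    fun a' m => gT_mul_gInv hdety a' m
  -- y-direction facts
  have hRicDz : ∀ j' k' : Fin n, DifferentiableAt ℝ (RicT (F t) (R t) j' k') y :=
    fun j' k' => diffAt_of_contDiffOn hOopen (RicT_smooth hOopen hFt hRt j' k') hy'
  have hgInvDz : ∀ j' k' : Fin n, DifferentiableAt ℝ (gInv (F t) j' k') y :=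
    fun j' k' => gInv_diffAt hOopen hFt hy' hdety j' k'
  have hpdInv : ∀ j' k' : Fin n, pd i (gInv (F t) j' k') y
      = -∑ a', ∑ m, gInv (F t) j' a' y * (2 * cartanT (F t) i a' m y) * gInv (F t) m k' y :=
    fun j' k' => pd_gInv hOopen hFt (fun z hz => hposd t ht z hz) hy' i j' k'
  -- expansion of pd i rho
  have hrho : pd i (rho (F t) (R t)) y
      = ∑ j, ∑ k, (pd i (gInv (F t) j k) y * RicT (F t) (R t) j k y
        + gInv (F t) j k y * pd i (RicT (F t) (R t) j k) y) := by
    have h1 : pd i (rho (F t) (R t)) y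
        = pd i (fun z => ∑ j, ∑ k, gInv (F t) j k z * RicT (F t) (R t) j k z) y := rfl
    rw [h1, pd_sum (f := fun j z => ∑ k, gInv (F t) j k z * RicT (F t) (R t) j k z)
      (fun j _ => DifferentiableAt.fun_sum fun k _ => (hgInvDz j k).mul (hRicDz j k)) i]
    refine Finset.sum_congr rfl fun j _ => ?_
    rw [pd_sum (f := fun k z => gInv (F t) j k z * RicT (F t) (R t) j k z)
      (fun k _ => (hgInvDz j k).mul (hRicDz j k)) i]
    refine Finset.sum_congr rfl fun k _ => ?_
    exact pd_mul (hgInvDz j k) (hRicDz j k) i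
  -- expansion of deriv of mC
  have hmC : deriv (fun s => mC (F s) i y) t
      = ∑ j, ∑ k, (deriv (fun s => gInv (F s) j k y) t * cartanT (F t) i j k y
        + gInv (F t) j k y * deriv (fun s => cartanT (F s) i j k y) t) := by
    have h1 : (fun s => mC (F s) i y)
        = fun s => ∑ j, ∑ k, gInv (F s) j k y * cartanT (F s) i j k y := rfl
    rw [h1, deriv_fun_sum (fun j _ => DifferentiableAt.fun_sum fun k _ => (hgInvD j k).fun_mul (hCd j k))]
    refine Finset.sum_congr rfl fun j _ => ?_
    rw [deriv_fun_sum (fun k _ => (hgInvD j k).fun_mul (hCd j k))]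
    refine Finset.sum_congr rfl fun k _ => ?_
    exact deriv_fun_mul (hgInvD j k) (hCd j k)
  calc deriv (fun s => mC (F s) i y) t
      = ∑ j, ∑ k, ((-∑ a', ∑ m, gInv (F t) j a' y
            * (-2 * RicT (F t) (R t) a' m y + 2 * c t * gT (F t) a' m y) * gInv (F t) m k y)
          * cartanT (F t) i j k y
        + gInv (F t) j k y * (-pd i (RicT (F t) (R t) j k) y
            + 2 * c t * cartanT (F t) i j k y)) := by
        rw [hmC]
        exact Finset.sum_congr rfl fun j _ => Finset.sum_congr rfl fun k _ => by
          rw [hgInvDeriv j k, hCderiv j k]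
    _ = -∑ j, ∑ k, ((-∑ a', ∑ m, gInv (F t) j a' y * (2 * cartanT (F t) i a' m y)
            * gInv (F t) m k y) * RicT (F t) (R t) j k y
        + gInv (F t) j k y * pd i (RicT (F t) (R t) j k) y) :=
        final_algebra (fun a' b' => gInv (F t) a' b' y) (fun a' b' => gT (F t) a' b' y)
          (fun a' b' => cartanT (F t) i a' b' y) (fun a' b' => RicT (F t) (R t) a' b' y)
          (fun a' b' => pd i (RicT (F t) (R t) a' b') y) (c t) hGIsym hid
    _ = -pd i (rho (F t) (R t)) y := by
        rw [hrho]
        congr 1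
        exact Finset.sum_congr rfl fun j _ => Finset.sum_congr rfl fun k _ => by
          rw [hpdInv j k]
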